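/- arXiv:math/0312255 — 2 statements merged into one kernel-verified Lean document; each statement's English description precedes it below -/
import Mathlib

section
/- There is an absolute constant C > 0 such that for all real T ≥ 1, all positive integers h, and all real t with h² ≤ t ≤ T^{10}, the partial derivative in t of f(t,h) satisfies |∂f(t,h)/∂t| ≤ C (h² t^{−7/2} + T^{−1} t^{−5/2}). -/
open Real

/-- The weight function `f(t,h)` (depending on the parameter `T`). -/
noncomputable def f (T t : ℝ) (h : ℕ) : ℝ :=
  (-(Real.sqrt (t + h) - Real.sqrt t) ^ 2 +
      (3 * (2 * t + h) + 2 * Real.sqrt (t * (t + h))) /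
        (16 * π ^ 2 * Real.sqrt (t * (t + h)) * T)) *
    t ^ (-(3 : ℝ) / 4) * (t + h) ^ (-(3 : ℝ) / 4)

private lemma rpow_inv4 {x : ℝ} (hx : 0 < x) {c : ℝ} (n : ℕ) (hc : c * 4 = -(n : ℝ)) :
    x ^ c = ((x ^ ((1:ℝ)/4)) ^ n)⁻¹ := by
  rw [← Real.rpow_natCast (x ^ ((1:ℝ)/4)) n, ← Real.rpow_mul hx.le, ← Real.rpow_neg hx.le]
  congr 1
  linarith

private lemma inv_pow_le {q r : ℝ} (hq : 0 < q) (hqr : q ≤ r) (a b n : ℕ) (hab : n = a + b) :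
    (q ^ a * r ^ b)⁻¹ ≤ (q ^ n)⁻¹ := by
  have h1 : q ^ n ≤ q ^ a * r ^ b := by
    rw [hab, pow_add]
    exact mul_le_mul_of_nonneg_left (pow_le_pow_left₀ hq.le hqr b) (by positivity)
  exact inv_anti₀ (by positivity) h1

noncomputable def F (T : ℝ) (h : ℕ) (s : ℝ) : ℝ :=
  2 * (s ^ (-(1:ℝ)/4) * (s + (h:ℝ)) ^ (-(1:ℝ)/4)) -
    (2 * s + (h:ℝ)) * (s ^ (-(3:ℝ)/4) * (s + (h:ℝ)) ^ (-(3:ℝ)/4)) +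
    (3 * ((2 * s + (h:ℝ)) * (s ^ (-(5:ℝ)/4) * (s + (h:ℝ)) ^ (-(5:ℝ)/4))) +
      2 * (s ^ (-(3:ℝ)/4) * (s + (h:ℝ)) ^ (-(3:ℝ)/4))) / (16 * π ^ 2 * T)

private lemma f_eq (T : ℝ) (hT0 : T ≠ 0) (h : ℕ) (s : ℝ) (hs : 0 < s) :
    f T s h = F T h s := by
  have hv : 0 < s + (h:ℝ) := by positivity
  obtain ⟨q, hqdef⟩ : ∃ x, x = s ^ ((1:ℝ)/4) := ⟨_, rfl⟩
  obtain ⟨r, hrdef⟩ : ∃ x, x = (s + (h:ℝ)) ^ ((1:ℝ)/4) := ⟨_, rfl⟩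
  have hq : 0 < q := hqdef ▸ rpow_pos_of_pos hs _
  have hr : 0 < r := hrdef ▸ rpow_pos_of_pos hv _
  have hq4 : q ^ 4 = s := by
    rw [hqdef, ← Real.rpow_natCast (s ^ ((1:ℝ)/4)) 4, ← Real.rpow_mul hs.le]
    norm_num
  have hr4 : r ^ 4 = s + (h:ℝ) := by
    rw [hrdef, ← Real.rpow_natCast ((s + (h:ℝ)) ^ ((1:ℝ)/4)) 4, ← Real.rpow_mul hv.le]
    norm_num
  have hsq : Real.sqrt s = q ^ 2 := by
    rw [hqdef, ← Real.rpow_natCast (s ^ ((1:ℝ)/4)) 2, ← Real.rpow_mul hs.le,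
      Real.sqrt_eq_rpow]
    norm_num
  have hsr : Real.sqrt (s + (h:ℝ)) = r ^ 2 := by
    rw [hrdef, ← Real.rpow_natCast ((s + (h:ℝ)) ^ ((1:ℝ)/4)) 2, ← Real.rpow_mul hv.le,
      Real.sqrt_eq_rpow]
    norm_num
  have hh_eq : (h:ℝ) = r ^ 4 - q ^ 4 := by rw [hq4, hr4]; ring
  have hpi := Real.pi_ne_zero
  rw [f, F, Real.sqrt_mul hs.le, hsq, hsr,
    rpow_inv4 (c := -(3:ℝ)/4) hs 3 (by norm_num), rpow_inv4 (c := -(3:ℝ)/4) hv 3 (by norm_num),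
    rpow_inv4 (c := -(1:ℝ)/4) hs 1 (by norm_num), rpow_inv4 (c := -(1:ℝ)/4) hv 1 (by norm_num),
    rpow_inv4 (c := -(5:ℝ)/4) hs 5 (by norm_num), rpow_inv4 (c := -(5:ℝ)/4) hv 5 (by norm_num),
    ← hqdef, ← hrdef, hh_eq, ← hq4]
  field_simp
  ring


private lemma F_hasDeriv (T : ℝ) (hT0 : T ≠ 0) (h : ℕ) (t q r : ℝ) (ht : 0 < t)
    (hqdef : q = t ^ ((1:ℝ)/4)) (hrdef : r = (t + (h:ℝ)) ^ ((1:ℝ)/4)) :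
    HasDerivAt (F T h)
      ((r^2-q^2)^2 * ((q^3*r^3)⁻¹ * ((q^2*r^2)⁻¹ + 3/4*((q^4)⁻¹+(r^4)⁻¹))) +
        (6*(q^5*r^5)⁻¹ - 15/4*((q^5*r^5)⁻¹ + (q^9*r)⁻¹ + (q*r^9)⁻¹ + (q^5*r^5)⁻¹)
          - 3/2*((q^7*r^3)⁻¹ + (q^3*r^7)⁻¹)) / (16*π^2*T)) t := by
  have hv : 0 < t + (h:ℝ) := by positivity
  have hq : 0 < q := hqdef ▸ rpow_pos_of_pos ht _
  have hr : 0 < r := hrdef ▸ rpow_pos_of_pos hv _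
  have hq4 : q ^ 4 = t := by
    rw [hqdef, ← Real.rpow_natCast (t ^ ((1:ℝ)/4)) 4, ← Real.rpow_mul ht.le]
    norm_num
  have hr4 : r ^ 4 = t + (h:ℝ) := by
    rw [hrdef, ← Real.rpow_natCast ((t + (h:ℝ)) ^ ((1:ℝ)/4)) 4, ← Real.rpow_mul hv.le]
    norm_num
  have hh_eq : (h:ℝ) = r ^ 4 - q ^ 4 := by rw [hq4, hr4]; ring
  have hpi := Real.pi_ne_zero
  have hA1 : HasDerivAt (fun s : ℝ => s ^ (-(1:ℝ)/4)) (-(1:ℝ)/4 * t ^ (-(1:ℝ)/4 - 1)) t :=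
    Real.hasDerivAt_rpow_const (Or.inl ht.ne')
  have hA3 : HasDerivAt (fun s : ℝ => s ^ (-(3:ℝ)/4)) (-(3:ℝ)/4 * t ^ (-(3:ℝ)/4 - 1)) t :=
    Real.hasDerivAt_rpow_const (Or.inl ht.ne')
  have hA5 : HasDerivAt (fun s : ℝ => s ^ (-(5:ℝ)/4)) (-(5:ℝ)/4 * t ^ (-(5:ℝ)/4 - 1)) t :=
    Real.hasDerivAt_rpow_const (Or.inl ht.ne')
  have hB1 : HasDerivAt (fun s : ℝ => (s + (h:ℝ)) ^ (-(1:ℝ)/4))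
      (-(1:ℝ)/4 * (t + (h:ℝ)) ^ (-(1:ℝ)/4 - 1)) t := by
    simpa using ((hasDerivAt_id t).add_const (h:ℝ)).rpow_const (p := -(1:ℝ)/4) (Or.inl hv.ne')
  have hB3 : HasDerivAt (fun s : ℝ => (s + (h:ℝ)) ^ (-(3:ℝ)/4))
      (-(3:ℝ)/4 * (t + (h:ℝ)) ^ (-(3:ℝ)/4 - 1)) t := by
    simpa using ((hasDerivAt_id t).add_const (h:ℝ)).rpow_const (p := -(3:ℝ)/4) (Or.inl hv.ne')
  have hB5 : HasDerivAt (fun s : ℝ => (s + (h:ℝ)) ^ (-(5:ℝ)/4))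
      (-(5:ℝ)/4 * (t + (h:ℝ)) ^ (-(5:ℝ)/4 - 1)) t := by
    simpa using ((hasDerivAt_id t).add_const (h:ℝ)).rpow_const (p := -(5:ℝ)/4) (Or.inl hv.ne')
  have hL : HasDerivAt (fun s : ℝ => 2 * s + (h:ℝ)) 2 t := by
    simpa using ((hasDerivAt_id t).const_mul 2).add_const (h:ℝ)
  have hM1 := hA1.mul hB1
  have hM3 := hA3.mul hB3
  have hM5 := hA5.mul hB5
  have hraw := ((hM1.const_mul (2:ℝ)).sub (hL.mul hM3)).add
    ((((hL.mul hM5).const_mul (3:ℝ)).add (hM3.const_mul (2:ℝ))).div_const (16*π^2*T))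
  unfold F
  refine HasDerivAt.congr_deriv hraw ?_
  simp only [Pi.mul_apply]
  rw [rpow_inv4 (c := -(1:ℝ)/4 - 1) ht 5 (by norm_num),
    rpow_inv4 (c := -(1:ℝ)/4 - 1) hv 5 (by norm_num),
    rpow_inv4 (c := -(3:ℝ)/4 - 1) ht 7 (by norm_num),
    rpow_inv4 (c := -(3:ℝ)/4 - 1) hv 7 (by norm_num),
    rpow_inv4 (c := -(5:ℝ)/4 - 1) ht 9 (by norm_num),
    rpow_inv4 (c := -(5:ℝ)/4 - 1) hv 9 (by norm_num),
    rpow_inv4 (c := -(1:ℝ)/4) ht 1 (by norm_num),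
    rpow_inv4 (c := -(1:ℝ)/4) hv 1 (by norm_num),
    rpow_inv4 (c := -(3:ℝ)/4) ht 3 (by norm_num),
    rpow_inv4 (c := -(3:ℝ)/4) hv 3 (by norm_num),
    rpow_inv4 (c := -(5:ℝ)/4) ht 5 (by norm_num),
    rpow_inv4 (c := -(5:ℝ)/4) hv 5 (by norm_num),
    ← hqdef, ← hrdef, hh_eq, ← hq4]
  field_simp
  ring

set_option maxHeartbeats 1000000 in
theorem f_deriv_bound :
    ∃ C : ℝ, 0 < C ∧ ∀ T : ℝ, 1 ≤ T → ∀ h : ℕ, 0 < h → ∀ t : ℝ,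
      (h : ℝ) ^ 2 ≤ t → t ≤ T ^ (10 : ℕ) →
      |deriv (fun s => f T s h) t|
        ≤ C * ((h : ℝ) ^ 2 * t ^ (-(7 : ℝ) / 2) + T⁻¹ * t ^ (-(5 : ℝ) / 2)) := by
  refine ⟨2, by norm_num, ?_⟩
  intro T hT h hh t hht _
  have hh1 : (1:ℝ) ≤ (h:ℝ) := by exact_mod_cast hh
  have ht1 : (1:ℝ) ≤ t := by nlinarith
  have ht : 0 < t := lt_of_lt_of_le one_pos ht1
  have hv : 0 < t + (h:ℝ) := by positivity
  have hT0 : T ≠ 0 := by positivity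
  have hTpos : 0 < T := by linarith
  have hpi := Real.pi_ne_zero
  obtain ⟨q, hqdef⟩ : ∃ x, x = t ^ ((1:ℝ)/4) := ⟨_, rfl⟩
  obtain ⟨r, hrdef⟩ : ∃ x, x = (t + (h:ℝ)) ^ ((1:ℝ)/4) := ⟨_, rfl⟩
  have hq : 0 < q := hqdef ▸ rpow_pos_of_pos ht _
  have hr : 0 < r := hrdef ▸ rpow_pos_of_pos hv _
  have hq4 : q ^ 4 = t := by
    rw [hqdef, ← Real.rpow_natCast (t ^ ((1:ℝ)/4)) 4, ← Real.rpow_mul ht.le]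
    norm_num
  have hr4 : r ^ 4 = t + (h:ℝ) := by
    rw [hrdef, ← Real.rpow_natCast ((t + (h:ℝ)) ^ ((1:ℝ)/4)) 4, ← Real.rpow_mul hv.le]
    norm_num
  have hqr : q ≤ r := by
    rw [hqdef, hrdef]
    exact Real.rpow_le_rpow ht.le (by linarith) (by norm_num)
  have hh_eq : (h:ℝ) = r ^ 4 - q ^ 4 := by rw [hq4, hr4]; ring
  set P : ℝ := (q^3*r^3)⁻¹ * ((q^2*r^2)⁻¹ + 3/4*((q^4)⁻¹+(r^4)⁻¹)) with hPdef
  set K : ℝ := 6*(q^5*r^5)⁻¹ - 15/4*((q^5*r^5)⁻¹ + (q^9*r)⁻¹ + (q*r^9)⁻¹ + (q^5*r^5)⁻¹)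
      - 3/2*((q^7*r^3)⁻¹ + (q^3*r^7)⁻¹) with hKdef
  have hF : HasDerivAt (F T h) ((r^2-q^2)^2 * P + K / (16*π^2*T)) t := by
    rw [hPdef, hKdef]
    exact F_hasDeriv T hT0 h t q r ht hqdef hrdef
  -- rewrite the derivative
  have hev : (fun s => f T s h) =ᶠ[nhds t] F T h := by
    filter_upwards [Ioi_mem_nhds ht] with s hs
    exact f_eq T hT0 h s hs
  rw [hev.deriv_eq, hF.deriv,
    rpow_inv4 (c := -(7:ℝ)/2) ht 14 (by norm_num),
    rpow_inv4 (c := -(5:ℝ)/2) ht 10 (by norm_num), ← hqdef]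
  -- bounds
  have hP_pos : (0:ℝ) ≤ P := by rw [hPdef]; positivity
  have h0 : 0 ≤ r^2 - q^2 := by nlinarith [pow_le_pow_left₀ hq.le hqr 2]
  have h1 : r^2 - q^2 ≤ (h:ℝ)/(2*q^2) := by
    rw [le_div_iff₀ (by positivity), hh_eq]
    nlinarith [sq_nonneg (r^2-q^2)]
  have hsq_le : (r^2-q^2)^2 ≤ (h:ℝ)^2 / (4*q^4) := by
    calc (r^2-q^2)^2 ≤ ((h:ℝ)/(2*q^2))^2 := pow_le_pow_left₀ h0 h1 2
    _ = (h:ℝ)^2/(4*q^4) := by rw [div_pow]; ring_nf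
  have hP_le : P ≤ 5/2 * (q^10)⁻¹ := by
    have i1 : (q^3*r^3)⁻¹ ≤ (q^6)⁻¹ := inv_pow_le hq hqr 3 3 6 (by norm_num)
    have i2 : (q^2*r^2)⁻¹ ≤ (q^4)⁻¹ := inv_pow_le hq hqr 2 2 4 (by norm_num)
    have i3 : (r^4)⁻¹ ≤ (q^4)⁻¹ :=
      inv_anti₀ (by positivity) (pow_le_pow_left₀ hq.le hqr 4)
    calc P ≤ (q^6)⁻¹ * ((q^4)⁻¹ + 3/4*((q^4)⁻¹+(q^4)⁻¹)) := by
          rw [hPdef]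
          apply mul_le_mul i1 (by linarith) (by positivity) (by positivity)
    _ = 5/2 * (q^10)⁻¹ := by field_simp; ring
  have hM_le : (r^2-q^2)^2 * P ≤ (h:ℝ)^2 * (q^14)⁻¹ := by
    have hx : (0:ℝ) ≤ (h:ℝ)^2 * (q^14)⁻¹ := by positivity
    calc (r^2-q^2)^2 * P ≤ ((h:ℝ)^2/(4*q^4)) * (5/2*(q^10)⁻¹) :=
        mul_le_mul hsq_le hP_le hP_pos (by positivity)
    _ = 5/8 * ((h:ℝ)^2 * (q^14)⁻¹) := by field_simp; ring
    _ ≤ (h:ℝ)^2 * (q^14)⁻¹ := by linarith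
  have k1 : (q^5*r^5)⁻¹ ≤ (q^10)⁻¹ := inv_pow_le hq hqr 5 5 10 (by norm_num)
  have k2 : (q^9*r)⁻¹ ≤ (q^10)⁻¹ := by
    have := inv_pow_le hq hqr 9 1 10 (by norm_num)
    simpa using this
  have k3 : (q*r^9)⁻¹ ≤ (q^10)⁻¹ := by
    have := inv_pow_le hq hqr 1 9 10 (by norm_num)
    simpa using this
  have k4 : (q^7*r^3)⁻¹ ≤ (q^10)⁻¹ := inv_pow_le hq hqr 7 3 10 (by norm_num)
  have k5 : (q^3*r^7)⁻¹ ≤ (q^10)⁻¹ := inv_pow_le hq hqr 3 7 10 (by norm_num)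
  have n1 : (0:ℝ) ≤ (q^5*r^5)⁻¹ := by positivity
  have n2 : (0:ℝ) ≤ (q^9*r)⁻¹ := by positivity
  have n3 : (0:ℝ) ≤ (q*r^9)⁻¹ := by positivity
  have n4 : (0:ℝ) ≤ (q^7*r^3)⁻¹ := by positivity
  have n5 : (0:ℝ) ≤ (q^3*r^7)⁻¹ := by positivity
  have hK_abs : |K| ≤ 24*(q^10)⁻¹ := by
    rw [hKdef, abs_le]
    constructor <;> linarith [k1, k2, k3, k4, k5, n1, n2, n3, n4, n5, inv_nonneg.mpr (pow_nonneg hq.le 10)]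
  have habs : |(r^2-q^2)^2 * P + K / (16*π^2*T)| ≤ (r^2-q^2)^2 * P + |K|/(16*π^2*T) := by
    refine (abs_add_le _ _).trans ?_
    rw [abs_of_nonneg (by positivity : (0:ℝ) ≤ (r^2-q^2)^2 * P), abs_div,
      abs_of_pos (by positivity : (0:ℝ) < 16*π^2*T)]
  have hKd : |K|/(16*π^2*T) ≤ 2*(T⁻¹*(q^10)⁻¹) := by
    have hg : (0:ℝ) ≤ (q^10)⁻¹ := by positivity
    calc |K|/(16*π^2*T) ≤ (24*(q^10)⁻¹)/(16*π^2*T) := by gcongr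
    _ ≤ 2*(T⁻¹*(q^10)⁻¹) := by
        rw [div_le_iff₀ (by positivity)]
        have hrw : 2*(T⁻¹*(q^10)⁻¹)*(16*π^2*T) = 32*π^2*(q^10)⁻¹ := by field_simp; ring
        rw [hrw]
        have hpi2 : (9:ℝ) ≤ π^2 := by nlinarith [Real.pi_gt_three]
        nlinarith [mul_le_mul_of_nonneg_right hpi2 hg]
  calc |(r^2-q^2)^2 * P + K / (16*π^2*T)| ≤ (r^2-q^2)^2 * P + |K|/(16*π^2*T) := habs
  _ ≤ (h:ℝ)^2 * (q^14)⁻¹ + 2*(T⁻¹*(q^10)⁻¹) := add_le_add hM_le hKd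
  _ ≤ 2 * ((h:ℝ)^2 * ((q^14)⁻¹) + T⁻¹ * (q^10)⁻¹) := by
      have hx : (0:ℝ) ≤ (h:ℝ)^2 * (q^14)⁻¹ := by positivity
      linarith
end

section
/- Fix a real number β with 0 ≤ β ≤ 2/3. Suppose E : [1,∞) × ℕ₊ → ℝ is a measurable-in-the-first-variable function such that for every ε > 0 there is a constant C_ε with |E(N,m)| ≤ C_ε N^{2/3+ε} m^β whenever m ≤ N. Then for every ε > 0 there exist C > 0 and T₀ ≥ 2 such that for all T ≥ T₀, | T^{5/2} Σ_{1 ≤ h ≤ T^5} ∫_{h²}^{T^{10}} E(t,h) u(t,h) dt | ≤ C T^{2/3+ε}. -/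
open Real MeasureTheory

/-- `u(t,h)` is the `t`-derivative of `exp(-π² T (√(t+h) - √t)²) f(t,h)`. -/
noncomputable def u (T : ℝ) (h : ℕ) (t : ℝ) : ℝ :=
  deriv (fun s => Real.exp (-π ^ 2 * T * (Real.sqrt (s + h) - Real.sqrt s) ^ 2) * f T s h) t



lemma exp_neg_le_pow (x : ℝ) (hx : 0 < x) (k : ℕ) (hk : 0 < k) :
    Real.exp (-x) ≤ ((k:ℝ)/x)^k := by
  have hk0 : (0:ℝ) < k := by exact_mod_cast hk
  have h1 : x / k ≤ Real.exp (x / k) := by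
    have := Real.add_one_le_exp (x / k)
    nlinarith
  have h2 : (x / k)^k ≤ Real.exp x := by
    calc (x / k)^k ≤ (Real.exp (x / k))^k := pow_le_pow_left₀ (by positivity) h1 k
      _ = Real.exp (k * (x / k)) := by rw [← Real.exp_nat_mul]
      _ = Real.exp x := by rw [mul_div_cancel₀ _ hk0.ne']
  have h3 : 0 < (x / k)^k := by positivity
  rw [Real.exp_neg]
  rw [show ((k:ℝ)/x)^k = ((x/k)^k)⁻¹ by rw [← inv_pow, inv_div]]
  exact inv_anti₀ h3 h2

lemma rpow_split (t : ℝ) (ht : 0 < t) (p q : ℝ) (n : ℕ) (hpq : p = q - n) :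
    t^p = t^q / t^n := by
  rw [hpq, ← Real.rpow_natCast t n, ← Real.rpow_sub ht]

lemma rpow_neg_nat (t : ℝ) (ht : 0 < t) (n : ℕ) (p : ℝ) (hp : p = -(n:ℝ)) :
    t^p = (t^n)⁻¹ := by
  rw [hp, ← Real.rpow_natCast t n, ← Real.rpow_neg ht.le]

lemma key_small (T h t : ℝ) (hT : 1 ≤ T) (hh : 1 ≤ h) (ht : 1 ≤ t) (hle : t ≤ T * h^2) :
    T^(-(2:ℝ)) * h^(-(2:ℝ)) * t^(-(3:ℝ)/2) ≤ T^(-(11:ℝ)/6) * h^(-(5:ℝ)/3) * t^(-(5:ℝ)/3) := by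
  have hT0 : (0:ℝ) < T := by linarith
  have hh0 : (0:ℝ) < h := by linarith
  have ht0 : (0:ℝ) < t := by linarith
  have h1 : t^((1:ℝ)/6) ≤ T^((1:ℝ)/6) * h^((1:ℝ)/3) := by
    calc t^((1:ℝ)/6) ≤ (T * h^2)^((1:ℝ)/6) :=
          Real.rpow_le_rpow ht0.le hle (by norm_num)
      _ = T^((1:ℝ)/6) * h^((1:ℝ)/3) := by
          rw [Real.mul_rpow hT0.le (by positivity), ← Real.rpow_natCast h 2,
            ← Real.rpow_mul hh0.le]
          norm_num
  have h2 : T^(-(1:ℝ)/6) * h^(-(1:ℝ)/3) * t^((1:ℝ)/6) ≤ 1 := by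
    have e4 : T^(-(1:ℝ)/6) * h^(-(1:ℝ)/3) * t^((1:ℝ)/6)
        = t^((1:ℝ)/6) / (T^((1:ℝ)/6) * h^((1:ℝ)/3)) := by
      rw [show -(1:ℝ)/6 = -((1:ℝ)/6) by norm_num, show -(1:ℝ)/3 = -((1:ℝ)/3) by norm_num,
        Real.rpow_neg hT0.le, Real.rpow_neg hh0.le]
      field_simp
    rw [e4, div_le_one (by positivity)]
    exact h1
  have e1 : T^(-(2:ℝ)) = T^(-(11:ℝ)/6) * T^(-(1:ℝ)/6) := by
    rw [← Real.rpow_add hT0]; norm_num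
  have e2 : h^(-(2:ℝ)) = h^(-(5:ℝ)/3) * h^(-(1:ℝ)/3) := by
    rw [← Real.rpow_add hh0]; norm_num
  have e3 : t^(-(3:ℝ)/2) = t^(-(5:ℝ)/3) * t^((1:ℝ)/6) := by
    rw [← Real.rpow_add ht0]; norm_num
  rw [e1, e2, e3]
  calc T^(-(11:ℝ)/6) * T^(-(1:ℝ)/6) * (h^(-(5:ℝ)/3) * h^(-(1:ℝ)/3)) * (t^(-(5:ℝ)/3) * t^((1:ℝ)/6))
      = T^(-(11:ℝ)/6) * h^(-(5:ℝ)/3) * t^(-(5:ℝ)/3) * (T^(-(1:ℝ)/6) * h^(-(1:ℝ)/3) * t^((1:ℝ)/6)) := by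
        ring
    _ ≤ T^(-(11:ℝ)/6) * h^(-(5:ℝ)/3) * t^(-(5:ℝ)/3) * 1 :=
        mul_le_mul_of_nonneg_left h2 (by positivity)
    _ = T^(-(11:ℝ)/6) * h^(-(5:ℝ)/3) * t^(-(5:ℝ)/3) := mul_one _

lemma big_key (T h t : ℝ) (hT0 : 0 < T) (hh0 : 0 < h) (ht0 : 0 < t)
    (hle : T * h^2 ≤ t) (r s w : ℝ) (hr : 0 ≤ r) (hs : s = -r) (hw : w = -(2*r)) :
    t^s ≤ T^s * h^w := by
  subst hs hw
  have hpos : (0:ℝ) < T * h^2 := by positivity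
  calc t^(-r) ≤ (T * h^2)^(-r) :=
        Real.rpow_le_rpow_of_nonpos hpos hle (by linarith)
    _ = T^(-r) * h^(-(2*r)) := by
        rw [Real.mul_rpow hT0.le (by positivity), ← Real.rpow_natCast h 2,
          ← Real.rpow_mul hh0.le]
        congr 1
        ring

/-- clean form of the derivative -/
noncomputable def D (T : ℝ) (h : ℕ) (t : ℝ) : ℝ :=
  Real.exp (-π ^ 2 * T * (Real.sqrt (t + h) - Real.sqrt t) ^ 2) *
    (π ^ 2 * T * ((Real.sqrt (t + h) - Real.sqrt t) ^ 2 / (Real.sqrt t * Real.sqrt (t + h))) *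
        f T t h
      + (((Real.sqrt (t + h) - Real.sqrt t) ^ 2 / (Real.sqrt t * Real.sqrt (t + h))
            - 3 * (h:ℝ)^2 / (32 * π^2 * T * (Real.sqrt t * Real.sqrt (t + h))^3))
              * t ^ (-(3 : ℝ) / 4)
          + (-(Real.sqrt (t + h) - Real.sqrt t) ^ 2 +
              (3 * (2 * t + h) + 2 * Real.sqrt (t * (t + h))) /
                (16 * π ^ 2 * Real.sqrt (t * (t + h)) * T)) *
            (-(3/4) * t ^ (-(3 : ℝ) / 4) / t)) * ((t + h) ^ (-(3 : ℝ) / 4))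
      + ((-(Real.sqrt (t + h) - Real.sqrt t) ^ 2 +
              (3 * (2 * t + h) + 2 * Real.sqrt (t * (t + h))) /
                (16 * π ^ 2 * Real.sqrt (t * (t + h)) * T)) * t ^ (-(3 : ℝ) / 4)) *
          (-(3/4) * ((t + h) ^ (-(3 : ℝ) / 4)) / (t + h)))

lemma dW (h : ℕ) (t : ℝ) (ht : 0 < t) (hth : 0 < t + (h:ℝ)) :
    HasDerivAt (fun s : ℝ => (Real.sqrt (s + h) - Real.sqrt s) ^ 2)
      (-((Real.sqrt (t + h) - Real.sqrt t) ^ 2 / (Real.sqrt t * Real.sqrt (t + h)))) t := by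
  have ha : 0 < Real.sqrt t := Real.sqrt_pos.mpr ht
  have hb : 0 < Real.sqrt (t + h) := Real.sqrt_pos.mpr hth
  have d2 : HasDerivAt (fun s : ℝ => Real.sqrt s) (1 / (2 * Real.sqrt t)) t :=
    Real.hasDerivAt_sqrt ht.ne'
  have d1 : HasDerivAt (fun s : ℝ => Real.sqrt (s + h)) (1 / (2 * Real.sqrt (t + h))) t := by
    have := (Real.hasDerivAt_sqrt hth.ne').comp t ((hasDerivAt_id t).add_const (h:ℝ))
    exact this.congr_deriv (mul_one _)
  have := (d1.sub d2).pow 2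
  refine this.congr_deriv (Eq.symm ?_)
  have h1 : (Real.sqrt (t+h))^2 - (Real.sqrt t)^2 = (h:ℝ) := by
    rw [Real.sq_sqrt hth.le, Real.sq_sqrt ht.le]; ring
  simp only [Pi.sub_apply, Nat.cast_ofNat]
  field_simp
  ring

lemma dP (h : ℕ) (t : ℝ) (ht : 0 < t) (hth : 0 < t + (h:ℝ)) :
    HasDerivAt (fun s : ℝ => Real.sqrt (s * (s + h)))
      ((2*t + h) / (2 * Real.sqrt (t * (t + h)))) t := by
  have hmul : 0 < t * (t + (h:ℝ)) := mul_pos ht hth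
  have hinner : HasDerivAt (fun s : ℝ => s * (s + h)) (2*t + h) t := by
    have := (hasDerivAt_id t).mul ((hasDerivAt_id t).add_const (h:ℝ))
    refine this.congr_deriv (Eq.symm ?_)
    simp; ring
  have := (Real.hasDerivAt_sqrt hmul.ne').comp t hinner
  refine this.congr_deriv (Eq.symm ?_)
  field_simp

lemma dB (T : ℝ) (hT : T ≠ 0) (h : ℕ) (t : ℝ) (ht : 0 < t) (hth : 0 < t + (h:ℝ)) :
    HasDerivAt (fun s : ℝ => (3 * (2 * s + h) + 2 * Real.sqrt (s * (s + h))) /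
        (16 * π ^ 2 * Real.sqrt (s * (s + h)) * T))
      (-3 * (h:ℝ)^2 / (32 * π^2 * T * (Real.sqrt t * Real.sqrt (t + h))^3)) t := by
  have ha : 0 < Real.sqrt t := Real.sqrt_pos.mpr ht
  have hb : 0 < Real.sqrt (t + h) := Real.sqrt_pos.mpr hth
  have hPab : Real.sqrt (t * (t + h)) = Real.sqrt t * Real.sqrt (t + h) := Real.sqrt_mul ht.le _
  have hπ : π ≠ 0 := Real.pi_ne_zero
  have hnum : HasDerivAt (fun s : ℝ => 3 * (2 * s + h) + 2 * Real.sqrt (s * (s + h)))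
      (6 + 2 * ((2*t + h) / (2 * Real.sqrt (t * (t + h))))) t := by
    have h1 : HasDerivAt (fun s : ℝ => 3 * (2 * s + h)) 6 t := by
      have := (((hasDerivAt_id t).const_mul (2:ℝ)).add_const (h:ℝ)).const_mul (3:ℝ)
      refine this.congr_deriv (Eq.symm ?_); norm_num
    exact h1.add ((dP h t ht hth).const_mul 2)
  have hden : HasDerivAt (fun s : ℝ => 16 * π ^ 2 * Real.sqrt (s * (s + h)) * T)
      (16 * π ^ 2 * ((2*t + h) / (2 * Real.sqrt (t * (t + h)))) * T) t :=
    ((dP h t ht hth).const_mul (16 * π ^ 2)).mul_const T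
  have hden0 : 16 * π ^ 2 * Real.sqrt (t * (t + h)) * T ≠ 0 := by
    rw [hPab]; positivity
  have := hnum.div hden hden0
  refine this.congr_deriv (Eq.symm ?_)
  rw [hPab]
  have h1 : (h:ℝ) = (Real.sqrt (t+h))^2 - (Real.sqrt t)^2 := by
    rw [Real.sq_sqrt hth.le, Real.sq_sqrt ht.le]; ring
  have h2 : t = (Real.sqrt t)^2 := (Real.sq_sqrt ht.le).symm
  set a := Real.sqrt t
  set b := Real.sqrt (t + h)
  rw [h1]
  rw [h2]
  field_simp
  ring

lemma dq1 (t : ℝ) (ht : 0 < t) :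
    HasDerivAt (fun s : ℝ => s ^ (-(3:ℝ)/4)) (-(3/4) * t ^ (-(3:ℝ)/4) / t) t := by
  have := Real.hasDerivAt_rpow_const (p := -(3:ℝ)/4) (Or.inl ht.ne')
  convert this using 1
  rw [show -(3:ℝ)/4 - 1 = (-(3:ℝ)/4) - 1 by norm_num, Real.rpow_sub_one ht.ne']
  ring

lemma dq2 (h : ℕ) (t : ℝ) (hth : 0 < t + (h:ℝ)) :
    HasDerivAt (fun s : ℝ => (s + (h:ℝ)) ^ (-(3:ℝ)/4))
      (-(3/4) * (t + h) ^ (-(3:ℝ)/4) / (t + h)) t := by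
  have inner : HasDerivAt (fun s : ℝ => s + (h:ℝ)) 1 t := (hasDerivAt_id t).add_const _
  have := (Real.hasDerivAt_rpow_const (p := -(3:ℝ)/4) (Or.inl hth.ne')).comp t inner
  refine this.congr_deriv (Eq.symm ?_)
  rw [show -(3:ℝ)/4 - 1 = (-(3:ℝ)/4) - 1 by norm_num, Real.rpow_sub_one hth.ne']
  ring

lemma hasDerivAt_main (T : ℝ) (hT : T ≠ 0) (h : ℕ) (t : ℝ) (ht : 0 < t) :
    HasDerivAt (fun s => Real.exp (-π ^ 2 * T * (Real.sqrt (s + h) - Real.sqrt s) ^ 2) * f T s h)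
      (D T h t) t := by
  have hth : 0 < t + (h:ℝ) := by positivity
  have hX : HasDerivAt (fun s : ℝ => -(Real.sqrt (s + h) - Real.sqrt s) ^ 2 +
      (3 * (2 * s + h) + 2 * Real.sqrt (s * (s + h))) /
        (16 * π ^ 2 * Real.sqrt (s * (s + h)) * T))
      ((Real.sqrt (t + h) - Real.sqrt t) ^ 2 / (Real.sqrt t * Real.sqrt (t + h))
        - 3 * (h:ℝ)^2 / (32 * π^2 * T * (Real.sqrt t * Real.sqrt (t + h))^3)) t := by
    have := (dW h t ht hth).neg.add (dB T hT h t ht hth)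
    refine this.congr_deriv (Eq.symm ?_)
    ring
  have hF : HasDerivAt (fun s => f T s h)
      ((((Real.sqrt (t + h) - Real.sqrt t) ^ 2 / (Real.sqrt t * Real.sqrt (t + h))
            - 3 * (h:ℝ)^2 / (32 * π^2 * T * (Real.sqrt t * Real.sqrt (t + h))^3))
              * t ^ (-(3 : ℝ) / 4)
          + (-(Real.sqrt (t + h) - Real.sqrt t) ^ 2 +
              (3 * (2 * t + h) + 2 * Real.sqrt (t * (t + h))) /
                (16 * π ^ 2 * Real.sqrt (t * (t + h)) * T)) *
            (-(3/4) * t ^ (-(3 : ℝ) / 4) / t)) * ((t + h) ^ (-(3 : ℝ) / 4))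
      + ((-(Real.sqrt (t + h) - Real.sqrt t) ^ 2 +
              (3 * (2 * t + h) + 2 * Real.sqrt (t * (t + h))) /
                (16 * π ^ 2 * Real.sqrt (t * (t + h)) * T)) * t ^ (-(3 : ℝ) / 4)) *
          (-(3/4) * ((t + h) ^ (-(3 : ℝ) / 4)) / (t + h))) t := by
    simp only [f]
    exact ((hX.mul (dq1 t ht)).mul (dq2 h t hth))
  have hE : HasDerivAt (fun s : ℝ =>
      Real.exp (-π ^ 2 * T * (Real.sqrt (s + h) - Real.sqrt s) ^ 2))
      (Real.exp (-π ^ 2 * T * (Real.sqrt (t + h) - Real.sqrt t) ^ 2) *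
        (π ^ 2 * T * ((Real.sqrt (t + h) - Real.sqrt t) ^ 2 / (Real.sqrt t * Real.sqrt (t + h))))) t := by
    have := ((dW h t ht hth).const_mul (-π ^ 2 * T)).exp
    convert this using 1
    ring
  have := hE.mul hF
  refine this.congr_deriv (Eq.symm ?_)
  unfold D
  ring

lemma u_eq (T : ℝ) (hT : T ≠ 0) (h : ℕ) (t : ℝ) (ht : 0 < t) : u T h t = D T h t :=
  (hasDerivAt_main T hT h t ht).deriv

set_option maxHeartbeats 2000000 in
lemma D_le (T t hm a b : ℝ) (hT : 1 ≤ T) (hh1 : 1 ≤ hm) (ht2 : hm^2 ≤ t)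
    (ha0 : 0 < a) (hb0 : 0 < b) (hab : a ≤ b)
    (ha2 : a^2 = t) (hb2 : b^2 = t + hm) :
    |Real.exp (-π ^ 2 * T * (b - a) ^ 2) *
      (π ^ 2 * T * ((b - a) ^ 2 / (a * b)) *
          ((-(b - a) ^ 2 +
              (3 * (2 * t + hm) + 2 * (a * b)) / (16 * π ^ 2 * (a * b) * T)) *
            t ^ (-(3 : ℝ) / 4) * (t + hm) ^ (-(3 : ℝ) / 4))
        + (((b - a) ^ 2 / (a * b)
              - 3 * hm ^ 2 / (32 * π ^ 2 * T * (a * b) ^ 3)) * t ^ (-(3 : ℝ) / 4)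
            + (-(b - a) ^ 2 +
                (3 * (2 * t + hm) + 2 * (a * b)) / (16 * π ^ 2 * (a * b) * T)) *
              (-(3 / 4) * t ^ (-(3 : ℝ) / 4) / t)) * ((t + hm) ^ (-(3 : ℝ) / 4))
        + ((-(b - a) ^ 2 +
              (3 * (2 * t + hm) + 2 * (a * b)) / (16 * π ^ 2 * (a * b) * T)) *
            t ^ (-(3 : ℝ) / 4)) *
          (-(3 / 4) * ((t + hm) ^ (-(3 : ℝ) / 4)) / (t + hm)))|
      ≤ 100 * (T ^ (-(11:ℝ)/6) * hm ^ (-(5:ℝ)/3) * t ^ (-(5:ℝ)/3)) := by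
  have hh0 : (0:ℝ) < hm := by linarith
  have ht1 : (1:ℝ) ≤ t := le_trans (by nlinarith) ht2
  have ht0 : (0:ℝ) < t := by linarith
  have hT0 : (0:ℝ) < T := by linarith
  have hht : hm ≤ t := le_trans (by nlinarith) ht2
  have hth : (0:ℝ) < t + hm := by linarith
  have hπ2 : (9:ℝ) ≤ π^2 := by nlinarith [Real.pi_gt_three]
  have hπ10 : π^2 ≤ 10 := by nlinarith [Real.pi_gt_three, Real.pi_lt_d2]
  set q1 := t ^ (-(3:ℝ)/4) with hq1def
  set q2 := (t + hm) ^ (-(3:ℝ)/4) with hq2def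
  have hq1 : 0 < q1 := Real.rpow_pos_of_pos ht0 _
  have hq2 : 0 < q2 := Real.rpow_pos_of_pos hth _
  clear_value q1 q2
  have hba : 0 ≤ b - a := by linarith
  have hhba : hm = b^2 - a^2 := by rw [ha2, hb2]; ring
  have hW4' : (b-a)^2 * (4*t) ≤ hm^2 := by
    nlinarith [sq_nonneg (b-a),
      mul_nonneg (sq_nonneg (b-a)) (mul_nonneg hba (by linarith : (0:ℝ) ≤ b + 3*a))]
  have hW8' : hm^2 ≤ (b-a)^2 * (8*t) := by
    nlinarith [sq_nonneg (b-a),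
      mul_nonneg (sq_nonneg (b-a)) (mul_nonneg hba (by linarith : (0:ℝ) ≤ 3*b + a))]
  have hW4 : (b-a)^2 ≤ hm^2/(4*t) := by rw [le_div_iff₀ (by positivity)]; linarith
  have htab : t ≤ a*b := by nlinarith [mul_nonneg ha0.le hba]
  have hab2t : a*b ≤ 2*t := by nlinarith [mul_nonneg hb0.le hba]
  set B := (3 * (2 * t + hm) + 2 * (a * b)) / (16 * π ^ 2 * (a * b) * T) with hBdef
  have hB0 : 0 ≤ B := by rw [hBdef]; positivity
  have hB1 : B ≤ 1/T := by
    rw [hBdef]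
    have hnum : 3 * (2 * t + hm) + 2 * (a * b) ≤ 13 * t := by linarith
    have hden : 16 * π^2 * t * T ≤ 16 * π^2 * (a*b) * T := by gcongr
    have h1 : (3 * (2 * t + hm) + 2 * (a * b)) / (16 * π ^ 2 * (a * b) * T)
        ≤ 13 * t / (16 * π^2 * t * T) :=
      div_le_div₀ (by positivity) hnum (by positivity) hden
    refine h1.trans ?_
    rw [div_le_div_iff₀ (by positivity) hT0]
    nlinarith [mul_pos ht0 hT0, hπ2]
  clear_value B
  set X := -(b-a)^2 + B with hXdef
  have hX : |X| ≤ hm^2/(4*t) + 1/T := by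
    rw [hXdef, show (-(b-a)^2 + B) = B - (b-a)^2 by ring]
    refine (abs_sub _ _).trans ?_
    rw [abs_of_nonneg hB0, abs_of_nonneg (sq_nonneg _)]
    have := add_le_add hB1 hW4
    linarith
  clear_value X
  have hWab : (b-a)^2/(a*b) ≤ hm^2/(4*t^2) := by
    rw [div_le_div_iff₀ (by positivity) (by positivity)]
    have s1 := mul_le_mul_of_nonneg_right hW4' ht0.le
    have s2 := mul_nonneg (sq_nonneg hm) (sub_nonneg.mpr htab)
    nlinarith [s1, s2]
  have hB' : 3*hm^2/(32*π^2*T*(a*b)^3) ≤ hm^2/(4*t^2) := by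
    rw [div_le_div_iff₀ (by positivity) (by positivity)]
    have habc : t^3 ≤ (a*b)^3 := pow_le_pow_left₀ ht0.le htab 3
    have k1 : 12*t^2 ≤ 288*t^3 := by nlinarith [ht1, sq_nonneg t]
    have k2 : 288*t^3 ≤ 32*π^2*t^3 := by nlinarith [hπ2, pow_pos ht0 3]
    have k3 : 32*π^2*t^3 ≤ 32*π^2*(a*b)^3 := by
      apply mul_le_mul_of_nonneg_left habc (by positivity)
    have k4 : 32*π^2*(a*b)^3 ≤ 32*π^2*T*(a*b)^3 := by
      have := pow_pos (mul_pos ha0 hb0) 3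
      nlinarith [hT, this, hπ2]
    have k5 : 12*t^2 ≤ 32*π^2*T*(a*b)^3 := by linarith
    have := mul_le_mul_of_nonneg_left k5 (sq_nonneg hm)
    nlinarith [this]
  have hY : |(b-a)^2/(a*b) - 3*hm^2/(32*π^2*T*(a*b)^3)| ≤ hm^2/(2*t^2) := by
    have h0 : (0:ℝ) ≤ (b-a)^2/(a*b) := by positivity
    have h0' : (0:ℝ) ≤ 3*hm^2/(32*π^2*T*(a*b)^3) := by positivity
    refine (abs_sub _ _).trans ?_
    rw [abs_of_nonneg h0, abs_of_nonneg h0']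
    calc (b-a)^2/(a*b) + 3*hm^2/(32*π^2*T*(a*b)^3)
        ≤ hm^2/(4*t^2) + hm^2/(4*t^2) := add_le_add hWab hB'
      _ = hm^2/(2*t^2) := by ring
  have hq2le : q2 ≤ q1 := by
    rw [hq1def, hq2def]
    exact Real.rpow_le_rpow_of_nonpos ht0 (by linarith) (by norm_num)
  have hq1q2 : q1 * q2 ≤ t^(-(3:ℝ)/2) := by
    calc q1 * q2 ≤ q1 * q1 := mul_le_mul_of_nonneg_left hq2le hq1.le
      _ = t^(-(3:ℝ)/2) := by rw [hq1def, ← Real.rpow_add ht0]; norm_num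
  set E := Real.exp (-π ^ 2 * T * (b - a) ^ 2) with hEdef
  have hE0 : 0 < E := Real.exp_pos _
  have hE1 : E ≤ 1 := by
    rw [hEdef, Real.exp_le_one_iff]
    have : (0:ℝ) ≤ π^2*T*(b-a)^2 := by positivity
    linarith
  have hEx : E ≤ Real.exp (-(T*hm^2/t)) := by
    rw [hEdef]
    apply Real.exp_le_exp.mpr
    rw [show -π^2*T*(b-a)^2 = -(π^2*T*(b-a)^2) by ring, neg_le_neg_iff, div_le_iff₀ ht0]
    have s1 := mul_le_mul_of_nonneg_left hW8' hT0.le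
    have s2 : T*((b-a)^2*(8*t)) ≤ π^2*T*(b-a)^2*t := by
      nlinarith [mul_nonneg (mul_nonneg hT0.le (sq_nonneg (b-a))) ht0.le, hπ2]
    linarith
  clear_value E
  -- the three summands
  set Z := t^(-(3:ℝ)/2) with hZdef
  have hZ0 : 0 < Z := Real.rpow_pos_of_pos ht0 _
  have hm1 : |π ^ 2 * T * ((b - a) ^ 2 / (a * b)) * (X * q1 * q2)|
      ≤ π^2*T*(hm^2/(4*t^2))*((hm^2/(4*t)+1/T)*Z) := by
    have e1 : |π ^ 2 * T * ((b - a) ^ 2 / (a * b)) * (X * q1 * q2)|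
        = π ^ 2 * T * ((b - a) ^ 2 / (a * b)) * (|X| * (q1 * q2)) := by
      rw [abs_mul,
        abs_of_nonneg (by positivity : (0:ℝ) ≤ π ^ 2 * T * ((b - a) ^ 2 / (a * b))),
        abs_mul, abs_mul, abs_of_nonneg hq1.le, abs_of_nonneg hq2.le]
      ring
    rw [e1]
    have h2 : |X| * (q1 * q2) ≤ (hm^2/(4*t)+1/T)*Z :=
      mul_le_mul hX hq1q2 (by positivity) (by positivity)
    exact mul_le_mul (mul_le_mul_of_nonneg_left hWab (by positivity)) h2
      (by positivity) (by positivity)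
  have hm2 : |(((b - a) ^ 2 / (a * b) - 3 * hm ^ 2 / (32 * π ^ 2 * T * (a * b) ^ 3)) * q1
        + X * (-(3 / 4) * q1 / t)) * q2|
      ≤ (hm^2/(2*t^2))*Z + (hm^2/(4*t)+1/T)*((3/4)*(Z/t)) := by
    have e2 : |X * (-(3 / 4) * q1 / t)| = |X| * ((3/4) * q1 / t) := by
      rw [abs_mul, abs_of_nonpos (by rw [neg_mul, neg_div]; simp only [Left.neg_nonpos_iff]; positivity : -(3/4) * q1 / t ≤ 0)]
      ring
    calc |(((b - a) ^ 2 / (a * b) - 3 * hm ^ 2 / (32 * π ^ 2 * T * (a * b) ^ 3)) * q1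
          + X * (-(3 / 4) * q1 / t)) * q2|
        = |((b - a) ^ 2 / (a * b) - 3 * hm ^ 2 / (32 * π ^ 2 * T * (a * b) ^ 3)) * q1
          + X * (-(3 / 4) * q1 / t)| * q2 := by
          rw [abs_mul, abs_of_nonneg hq2.le]
      _ ≤ (|(b - a) ^ 2 / (a * b) - 3 * hm ^ 2 / (32 * π ^ 2 * T * (a * b) ^ 3)| * q1
          + |X| * ((3/4) * q1 / t)) * q2 := by
          apply mul_le_mul_of_nonneg_right _ hq2.le
          refine (abs_add_le _ _).trans ?_
          rw [abs_mul, abs_of_nonneg hq1.le, e2]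
      _ ≤ ((hm^2/(2*t^2)) * q1 + (hm^2/(4*t)+1/T) * ((3/4) * q1 / t)) * q2 := by
          apply mul_le_mul_of_nonneg_right _ hq2.le
          exact add_le_add (mul_le_mul_of_nonneg_right hY hq1.le)
            (mul_le_mul_of_nonneg_right hX (by positivity))
      _ = (hm^2/(2*t^2)) * (q1*q2) + (hm^2/(4*t)+1/T) * ((3/4) * ((q1*q2) / t)) := by
          ring
      _ ≤ (hm^2/(2*t^2))*Z + (hm^2/(4*t)+1/T)*((3/4)*(Z/t)) := by gcongr
  have hm3 : |(X * q1) * (-(3 / 4) * q2 / (t + hm))|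
      ≤ (hm^2/(4*t)+1/T)*((3/4)*(Z/t)) := by
    have e3 : |(X * q1) * (-(3 / 4) * q2 / (t + hm))|
        = |X| * (q1 * ((3/4) * q2 / (t+hm))) := by
      rw [abs_mul, abs_mul, abs_of_nonneg hq1.le,
        abs_of_nonpos (by rw [neg_mul, neg_div]; simp only [Left.neg_nonpos_iff]; positivity : -(3/4) * q2 / (t+hm) ≤ 0)]
      ring
    rw [e3]
    calc |X| * (q1 * ((3/4) * q2 / (t+hm)))
        ≤ (hm^2/(4*t)+1/T) * (q1 * ((3/4) * q2 / t)) := by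
          apply mul_le_mul hX _ (by positivity) (by positivity)
          gcongr
          linarith
      _ = (hm^2/(4*t)+1/T) * ((3/4) * ((q1*q2) / t)) := by ring
      _ ≤ (hm^2/(4*t)+1/T)*((3/4)*(Z/t)) := by gcongr
  -- combine into monomial bound
  set R := T ^ (-(11:ℝ)/6) * hm ^ (-(5:ℝ)/3) * t ^ (-(5:ℝ)/3) with hRdef
  have hR0 : 0 < R := by
    rw [hRdef]; positivity
  have hsplit9 : t^(-(9:ℝ)/2) = Z/t^3 := by
    rw [hZdef]; exact rpow_split t ht0 _ _ 3 (by norm_num)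
  have hsplit7 : t^(-(7:ℝ)/2) = Z/t^2 := by
    rw [hZdef]; exact rpow_split t ht0 _ _ 2 (by norm_num)
  have hsplit5 : t^(-(5:ℝ)/2) = Z/t^1 := by
    rw [hZdef]; exact rpow_split t ht0 _ _ 1 (by norm_num)
  have hMsum : π^2*T*(hm^2/(4*t^2))*((hm^2/(4*t)+1/T)*Z)
      + ((hm^2/(2*t^2))*Z + (hm^2/(4*t)+1/T)*((3/4)*(Z/t)))
      + (hm^2/(4*t)+1/T)*((3/4)*(Z/t))
      ≤ T*hm^4*(Z/t^3) + 5*hm^2*(Z/t^2) + 2*(Z/t)/T := by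
    rw [← sub_nonneg]
    have e : T*hm^4*(Z/t^3) + 5*hm^2*(Z/t^2) + 2*(Z/t)/T
        - (π^2*T*(hm^2/(4*t^2))*((hm^2/(4*t)+1/T)*Z)
          + ((hm^2/(2*t^2))*Z + (hm^2/(4*t)+1/T)*((3/4)*(Z/t)))
          + (hm^2/(4*t)+1/T)*((3/4)*(Z/t)))
        = (16 - π^2)/16 * (T*hm^4*Z/t^3) + (33 - 2*π^2)/8 * (hm^2*Z/t^2)
          + (1/2) * (Z/(t*T)) := by
      field_simp
      ring
    rw [e]
    have c1 : (0:ℝ) ≤ (16 - π^2)/16 := by linarith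
    have c2 : (0:ℝ) ≤ (33 - 2*π^2)/8 := by linarith
    have d1 : (0:ℝ) ≤ T*hm^4*Z/t^3 := by positivity
    have d2 : (0:ℝ) ≤ hm^2*Z/t^2 := by positivity
    have d3 : (0:ℝ) ≤ Z/(t*T) := by positivity
    have := add_nonneg (add_nonneg (mul_nonneg c1 d1) (mul_nonneg c2 d2))
      (mul_nonneg (by norm_num : (0:ℝ) ≤ (1:ℝ)/2) d3)
    linarith
  -- assemble
  set R := T ^ (-(11:ℝ)/6) * hm ^ (-(5:ℝ)/3) * t ^ (-(5:ℝ)/3) with hRdef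
  have hR0 : 0 < R := by rw [hRdef]; positivity
  have hfinal : E * (T*hm^4*(Z/t^3) + 5*hm^2*(Z/t^2) + 2*(Z/t)/T) ≤ 100 * R := by
    rcases le_total t (T*hm^2) with hcase | hcase
    · -- small t : use exponential decay
      have hks : T^(-(2:ℝ)) * hm^(-(2:ℝ)) * t^(-(3:ℝ)/2)
          ≤ T^(-(11:ℝ)/6) * hm^(-(5:ℝ)/3) * t^(-(5:ℝ)/3) :=
        key_small T hm t hT hh1 ht1 hcase
      have hx : (0:ℝ) < T*hm^2/t := by positivity
      have hE3 : E ≤ 27 * (t^3/(T*hm^2)^3) := by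
        refine hEx.trans ?_
        refine (exp_neg_le_pow _ hx 3 (by norm_num)).trans_eq ?_
        field_simp
        ring
      have hE2 : E ≤ 4 * (t^2/(T*hm^2)^2) := by
        refine hEx.trans ?_
        refine (exp_neg_le_pow _ hx 2 (by norm_num)).trans_eq ?_
        field_simp
        ring
      have hE1' : E ≤ 1 * (t/(T*hm^2)) := by
        refine hEx.trans ?_
        refine (exp_neg_le_pow _ hx 1 (by norm_num)).trans_eq ?_
        field_simp
        norm_num
      have hTZ : T^(-(2:ℝ)) * hm^(-(2:ℝ)) * t^(-(3:ℝ)/2)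
          = (T^2)⁻¹ * (hm^2)⁻¹ * Z := by
        rw [rpow_neg_nat T hT0 2 _ (by norm_num), rpow_neg_nat hm hh0 2 _ (by norm_num), hZdef]
      have t1 : E * (T*hm^4*(Z/t^3)) ≤ 27 * (T^(-(2:ℝ)) * hm^(-(2:ℝ)) * t^(-(3:ℝ)/2)) := by
        rw [hTZ]
        calc E * (T*hm^4*(Z/t^3)) ≤ (27 * (t^3/(T*hm^2)^3)) * (T*hm^4*(Z/t^3)) := by
              apply mul_le_mul_of_nonneg_right hE3 (by positivity)
          _ = 27 * ((T^2)⁻¹ * (hm^2)⁻¹ * Z) := by field_simp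
      have t2 : E * (5*hm^2*(Z/t^2)) ≤ 20 * (T^(-(2:ℝ)) * hm^(-(2:ℝ)) * t^(-(3:ℝ)/2)) := by
        rw [hTZ]
        calc E * (5*hm^2*(Z/t^2)) ≤ (4 * (t^2/(T*hm^2)^2)) * (5*hm^2*(Z/t^2)) := by
              apply mul_le_mul_of_nonneg_right hE2 (by positivity)
          _ = 20 * ((T^2)⁻¹ * (hm^2)⁻¹ * Z) := by field_simp; ring
      have t3 : E * (2*(Z/t)/T) ≤ 2 * (T^(-(2:ℝ)) * hm^(-(2:ℝ)) * t^(-(3:ℝ)/2)) := by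
        rw [hTZ]
        calc E * (2*(Z/t)/T) ≤ (1 * (t/(T*hm^2))) * (2*(Z/t)/T) := by
              apply mul_le_mul_of_nonneg_right hE1' (by positivity)
          _ = 2 * ((T^2)⁻¹ * (hm^2)⁻¹ * Z) := by field_simp
      calc E * (T*hm^4*(Z/t^3) + 5*hm^2*(Z/t^2) + 2*(Z/t)/T)
          = E * (T*hm^4*(Z/t^3)) + E * (5*hm^2*(Z/t^2)) + E * (2*(Z/t)/T) := by ring
        _ ≤ 27 * (T^(-(2:ℝ)) * hm^(-(2:ℝ)) * t^(-(3:ℝ)/2))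
            + 20 * (T^(-(2:ℝ)) * hm^(-(2:ℝ)) * t^(-(3:ℝ)/2))
            + 2 * (T^(-(2:ℝ)) * hm^(-(2:ℝ)) * t^(-(3:ℝ)/2)) := by
            exact add_le_add (add_le_add t1 t2) t3
        _ = 49 * (T^(-(2:ℝ)) * hm^(-(2:ℝ)) * t^(-(3:ℝ)/2)) := by ring
        _ ≤ 49 * R := by
            rw [hRdef]; exact mul_le_mul_of_nonneg_left hks (by norm_num)
        _ ≤ 100 * R := by linarith
    · -- large t : exponential ≤ 1
      have es9 : t^(-(9:ℝ)/2) = t^(-(17:ℝ)/6) * t^(-(5:ℝ)/3) := by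
        rw [← Real.rpow_add ht0]; norm_num
      have es7 : t^(-(7:ℝ)/2) = t^(-(11:ℝ)/6) * t^(-(5:ℝ)/3) := by
        rw [← Real.rpow_add ht0]; norm_num
      have es5 : t^(-(5:ℝ)/2) = t^(-(5:ℝ)/6) * t^(-(5:ℝ)/3) := by
        rw [← Real.rpow_add ht0]; norm_num
      have k1 := big_key T hm t hT0 hh0 ht0 hcase ((17:ℝ)/6) (-(17:ℝ)/6) (-(17:ℝ)/3)
        (by norm_num) (by norm_num) (by norm_num)
      have k2 := big_key T hm t hT0 hh0 ht0 hcase ((11:ℝ)/6) (-(11:ℝ)/6) (-(11:ℝ)/3)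
        (by norm_num) (by norm_num) (by norm_num)
      have k3 := big_key T hm t hT0 hh0 ht0 hcase ((5:ℝ)/6) (-(5:ℝ)/6) (-(5:ℝ)/3)
        (by norm_num) (by norm_num) (by norm_num)
      have eT1 : T * T^(-(17:ℝ)/6) = T^(-(11:ℝ)/6) := by
        nth_rewrite 1 [← Real.rpow_one T]
        rw [← Real.rpow_add hT0]; norm_num
      have eh1 : hm^4 * hm^(-(17:ℝ)/3) = hm^(-(5:ℝ)/3) := by
        rw [← Real.rpow_natCast hm 4, ← Real.rpow_add hh0]; norm_num
      have eh2 : hm^2 * hm^(-(11:ℝ)/3) = hm^(-(5:ℝ)/3) := by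
        rw [← Real.rpow_natCast hm 2, ← Real.rpow_add hh0]; norm_num
      have eT3 : T^(-(5:ℝ)/6) / T = T^(-(11:ℝ)/6) := by
        rw [div_eq_mul_inv, ← Real.rpow_neg_one T, ← Real.rpow_add hT0]; norm_num
      have b1 : T*hm^4*(Z/t^3) ≤ R := by
        rw [hZdef, ← rpow_split t ht0 (-(9:ℝ)/2) (-(3:ℝ)/2) 3 (by norm_num)]
        calc T*hm^4*t^(-(9:ℝ)/2) = T*hm^4*(t^(-(17:ℝ)/6) * t^(-(5:ℝ)/3)) := by rw [es9]
          _ ≤ T*hm^4*((T^(-(17:ℝ)/6) * hm^(-(17:ℝ)/3)) * t^(-(5:ℝ)/3)) := by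
              have h5 : (0:ℝ) < t^(-(5:ℝ)/3) := Real.rpow_pos_of_pos ht0 _
              apply mul_le_mul_of_nonneg_left _ (by positivity)
              exact mul_le_mul_of_nonneg_right k1 h5.le
          _ = (T * T^(-(17:ℝ)/6)) * (hm^4 * hm^(-(17:ℝ)/3)) * t^(-(5:ℝ)/3) := by ring
          _ = R := by rw [eT1, eh1, hRdef]
      have b2 : 5*hm^2*(Z/t^2) ≤ 5*R := by
        rw [hZdef, ← rpow_split t ht0 (-(7:ℝ)/2) (-(3:ℝ)/2) 2 (by norm_num)]
        calc 5*hm^2*t^(-(7:ℝ)/2) = 5*(hm^2*(t^(-(11:ℝ)/6) * t^(-(5:ℝ)/3))) := by rw [es7]; ring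
          _ ≤ 5*(hm^2*((T^(-(11:ℝ)/6) * hm^(-(11:ℝ)/3)) * t^(-(5:ℝ)/3))) := by
              have h5 : (0:ℝ) < t^(-(5:ℝ)/3) := Real.rpow_pos_of_pos ht0 _
              apply mul_le_mul_of_nonneg_left _ (by norm_num)
              apply mul_le_mul_of_nonneg_left _ (by positivity)
              exact mul_le_mul_of_nonneg_right k2 h5.le
          _ = 5*(T^(-(11:ℝ)/6) * (hm^2 * hm^(-(11:ℝ)/3)) * t^(-(5:ℝ)/3)) := by ring
          _ = 5*R := by rw [eh2, hRdef]
      have b3 : 2*(Z/t)/T ≤ 2*R := by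
        have ez : Z/t = t^(-(5:ℝ)/2) := by
          rw [hZdef, rpow_split t ht0 (-(5:ℝ)/2) (-(3:ℝ)/2) 1 (by norm_num), pow_one]
        rw [ez]
        calc 2*t^(-(5:ℝ)/2)/T = 2*((t^(-(5:ℝ)/6) * t^(-(5:ℝ)/3))/T) := by rw [es5]; ring
          _ ≤ 2*(((T^(-(5:ℝ)/6) * hm^(-(5:ℝ)/3)) * t^(-(5:ℝ)/3))/T) := by
              have h5 : (0:ℝ) < t^(-(5:ℝ)/3) := Real.rpow_pos_of_pos ht0 _
              gcongr
          _ = 2*((T^(-(5:ℝ)/6)/T) * hm^(-(5:ℝ)/3) * t^(-(5:ℝ)/3)) := by ring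
          _ = 2*R := by rw [eT3, hRdef]
      calc E * (T*hm^4*(Z/t^3) + 5*hm^2*(Z/t^2) + 2*(Z/t)/T)
          ≤ 1 * (T*hm^4*(Z/t^3) + 5*hm^2*(Z/t^2) + 2*(Z/t)/T) := by
            apply mul_le_mul_of_nonneg_right hE1 (by positivity)
        _ = T*hm^4*(Z/t^3) + 5*hm^2*(Z/t^2) + 2*(Z/t)/T := by ring
        _ ≤ R + 5*R + 2*R := add_le_add (add_le_add b1 b2) b3
        _ = 8*R := by ring
        _ ≤ 100*R := by linarith
  calc |E * (π ^ 2 * T * ((b - a) ^ 2 / (a * b)) * (X * q1 * q2)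
        + (((b - a) ^ 2 / (a * b) - 3 * hm ^ 2 / (32 * π ^ 2 * T * (a * b) ^ 3)) * q1
            + X * (-(3 / 4) * q1 / t)) * q2
        + (X * q1) * (-(3 / 4) * q2 / (t + hm)))|
      = E * |π ^ 2 * T * ((b - a) ^ 2 / (a * b)) * (X * q1 * q2)
        + (((b - a) ^ 2 / (a * b) - 3 * hm ^ 2 / (32 * π ^ 2 * T * (a * b) ^ 3)) * q1
            + X * (-(3 / 4) * q1 / t)) * q2
        + (X * q1) * (-(3 / 4) * q2 / (t + hm))| := by
        rw [abs_mul, abs_of_pos hE0]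
    _ ≤ E * (π^2*T*(hm^2/(4*t^2))*((hm^2/(4*t)+1/T)*Z)
        + ((hm^2/(2*t^2))*Z + (hm^2/(4*t)+1/T)*((3/4)*(Z/t)))
        + (hm^2/(4*t)+1/T)*((3/4)*(Z/t))) := by
        apply mul_le_mul_of_nonneg_left _ hE0.le
        refine (abs_add_three _ _ _).trans ?_
        exact add_le_add (add_le_add hm1 hm2) hm3
    _ ≤ E * (T*hm^4*(Z/t^3) + 5*hm^2*(Z/t^2) + 2*(Z/t)/T) := by
        apply mul_le_mul_of_nonneg_left hMsum hE0.le
    _ ≤ 100 * R := hfinal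

lemma u_le (T : ℝ) (hT : 1 ≤ T) (h : ℕ) (hh : 1 ≤ h) (t : ℝ) (ht2 : ((h:ℝ))^2 ≤ t) :
    |u T h t| ≤ 100 * (T^(-(11:ℝ)/6) * (h:ℝ)^(-(5:ℝ)/3) * t^(-(5:ℝ)/3)) := by
  have hh1 : (1:ℝ) ≤ (h:ℝ) := by exact_mod_cast hh
  have ht0 : (0:ℝ) < t := by nlinarith
  have hth : (0:ℝ) < t + (h:ℝ) := by linarith
  rw [u_eq T (by linarith) h t ht0]
  unfold D
  simp only [f]
  rw [Real.sqrt_mul ht0.le]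
  exact D_le T t (h:ℝ) (Real.sqrt t) (Real.sqrt (t + (h:ℝ))) hT hh1 ht2
    (Real.sqrt_pos.mpr ht0) (Real.sqrt_pos.mpr hth)
    (Real.sqrt_le_sqrt (by linarith)) (Real.sq_sqrt ht0.le) (Real.sq_sqrt hth.le)

lemma harmonic_le (H : ℕ) : ∑ h ∈ Finset.Icc 1 H, ((h:ℕ):ℝ)⁻¹ ≤ 2*Real.log (H+1) := by
  induction H with
  | zero => simp
  | succ n ih =>
    rw [Finset.sum_Icc_succ_top (by omega : 1 ≤ n+1)]
    have l1 := Real.log_le_sub_one_of_pos (show (0:ℝ) < ((n:ℝ)+1)/((n:ℝ)+2) by positivity)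
    rw [Real.log_div (by positivity) (by positivity)] at l1
    have e : ((n:ℝ)+1)/((n:ℝ)+2) - 1 = -(1/((n:ℝ)+2)) := by
      field_simp
      norm_num
    have h2 : (((n+1:ℕ)):ℝ)⁻¹ ≤ 2*(1/((n:ℝ)+2)) := by
      push_cast
      rw [show (2:ℝ)*(1/((n:ℝ)+2)) = 2/((n:ℝ)+2) by ring, inv_eq_one_div,
        div_le_div_iff₀ (by positivity) (by positivity)]
      linarith
    have hcast : (((n+1:ℕ)):ℝ) + 1 = (n:ℝ)+2 := by push_cast; ring
    rw [hcast]
    have hl : Real.log ((n:ℝ)+1) - Real.log ((n:ℝ)+2) ≤ -(1/((n:ℝ)+2)) := by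
      rw [← e]; exact l1
    push_cast at ih h2 ⊢
    linarith

set_option maxHeartbeats 1000000 in
theorem sum2_bound_from_pointwise (β : ℝ) (hβ0 : 0 ≤ β) (hβ1 : β ≤ 2 / 3)
    (E : ℝ → ℕ → ℝ)
    (hmeas : ∀ m : ℕ, 0 < m → Measurable fun N : ℝ => E N m)
    (hbound : ∀ ε : ℝ, 0 < ε → ∃ Cε : ℝ, ∀ N : ℝ, 1 ≤ N → ∀ m : ℕ, 0 < m →
      (m : ℝ) ≤ N → |E N m| ≤ Cε * N ^ ((2 : ℝ) / 3 + ε) * (m : ℝ) ^ β) :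
    ∀ ε : ℝ, 0 < ε → ∃ C : ℝ, 0 < C ∧ ∃ T₀ : ℝ, 2 ≤ T₀ ∧ ∀ T : ℝ, T₀ ≤ T →
      |T ^ ((5 : ℝ) / 2) * ∑ h ∈ Finset.Icc 1 ⌊T ^ (5 : ℕ)⌋₊,
          ∫ t in ((h : ℝ) ^ 2)..(T ^ (10 : ℕ)), E t h * u T h t|
        ≤ C * T ^ ((2 : ℝ) / 3 + ε) := by
  intro ε hε
  have hδ0 : 0 < min ε 1 / 11 := by positivity
  set δ := min ε 1 / 11 with hδdef
  have hδε : 11*δ ≤ ε := by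
    rw [hδdef]
    have := min_le_left ε 1
    have := min_le_right ε 1
    rcases le_total ε 1 with hc | hc
    · rw [min_eq_left hc]; linarith
    · rw [min_eq_right hc]; linarith
  obtain ⟨Cδ, hC⟩ := hbound δ hδ0
  set C1 := max Cδ 0 + 1 with hC1def
  have hC10 : (0:ℝ) < C1 := by
    rw [hC1def]
    have := le_max_right Cδ (0:ℝ)
    linarith
  have hCle : Cδ ≤ C1 := by
    rw [hC1def]
    have := le_max_left Cδ (0:ℝ)
    linarith
  refine ⟨1200*C1/δ^2, by positivity, 2, le_refl 2, ?_⟩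
  intro T hT2
  have hT1 : (1:ℝ) ≤ T := by linarith
  have hT0 : (0:ℝ) < T := by linarith
  set H := ⌊T^(5:ℕ)⌋₊ with hHdef
  have hHle : (H:ℝ) ≤ T^5 := by rw [hHdef]; exact Nat.floor_le (by positivity)
  -- per-h integral bound
  have key : ∀ h ∈ Finset.Icc 1 H, |∫ t in ((h:ℝ)^2)..(T^(10:ℕ)), E t h * u T h t|
      ≤ (100*C1*T^(-(11:ℝ)/6)*(h:ℝ)^(β-5/3)) * (T^((10:ℝ)*δ)/δ) := by
    intro h hmem
    rw [Finset.mem_Icc] at hmem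
    obtain ⟨h1, h2⟩ := hmem
    have hh1 : (1:ℝ) ≤ (h:ℝ) := by exact_mod_cast h1
    have hh0 : (0:ℝ) < (h:ℝ) := by linarith
    have hhT5 : (h:ℝ) ≤ T^5 := le_trans (by exact_mod_cast h2) hHle
    have hab : ((h:ℝ)^2) ≤ T^(10:ℕ) := by
      nlinarith [mul_nonneg (sub_nonneg.mpr hhT5) (by positivity : (0:ℝ) ≤ T^5 + (h:ℝ))]
    have hmaj : ∀ᵐ t ∂(volume.restrict (Set.uIoc ((h:ℝ)^2) ((T:ℝ)^(10:ℕ)))),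
        ‖E t h * u T h t‖ ≤ (100*C1*T^(-(11:ℝ)/6)*(h:ℝ)^(β-5/3)) * t^(δ-1) := by
      filter_upwards [ae_restrict_mem measurableSet_uIoc] with t ht
      rw [Set.uIoc_of_le hab] at ht
      have ht2 : (h:ℝ)^2 ≤ t := le_of_lt ht.1
      have ht1 : (1:ℝ) ≤ t := le_trans (by nlinarith) ht2
      have ht0 : (0:ℝ) < t := by linarith
      have hht : (h:ℝ) ≤ t := le_trans (by nlinarith) ht2
      rw [Real.norm_eq_abs, abs_mul]
      have hEb : |E t h| ≤ Cδ * t^((2:ℝ)/3+δ) * (h:ℝ)^β := hC t ht1 h (by omega) hht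
      have hEb' : |E t h| ≤ C1 * t^((2:ℝ)/3+δ) * (h:ℝ)^β := by
        refine hEb.trans ?_
        have hp : (0:ℝ) ≤ t^((2:ℝ)/3+δ) * (h:ℝ)^β := by positivity
        nlinarith [hp, hCle]
      have hub := u_le T hT1 h h1 t ht2
      calc |E t h| * |u T h t|
          ≤ (C1 * t^((2:ℝ)/3+δ) * (h:ℝ)^β) *
              (100 * (T^(-(11:ℝ)/6) * (h:ℝ)^(-(5:ℝ)/3) * t^(-(5:ℝ)/3))) := by
            apply mul_le_mul hEb' hub (abs_nonneg _)
            exact le_trans (abs_nonneg _) hEb'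
        _ = (100*C1*T^(-(11:ℝ)/6)*(h:ℝ)^(β-5/3)) * t^(δ-1) := by
            rw [show (h:ℝ)^(β-5/3) = (h:ℝ)^β * (h:ℝ)^(-(5:ℝ)/3) by
                rw [← Real.rpow_add hh0]; congr 1; ring,
              show t^(δ-1) = t^((2:ℝ)/3+δ) * t^(-(5:ℝ)/3) by
                rw [← Real.rpow_add ht0]; congr 1; ring]
            ring
    have hgint : IntervalIntegrable
        (fun t => (100*C1*T^(-(11:ℝ)/6)*(h:ℝ)^(β-5/3)) * t^(δ-1)) volume
        ((h:ℝ)^2) ((T:ℝ)^(10:ℕ)) :=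
      (intervalIntegral.intervalIntegrable_rpow' (by linarith : (-1:ℝ) < δ-1)).const_mul _
    have hkey := intervalIntegral.norm_integral_le_of_norm_le hab
      (by rw [← Set.uIoc_of_le hab]; exact (ae_restrict_iff' measurableSet_uIoc).mp hmaj) hgint
    rw [Real.norm_eq_abs] at hkey
    refine hkey.trans ?_
    rw [intervalIntegral.integral_const_mul, integral_rpow (Or.inl (by linarith)),
      show δ - 1 + 1 = δ by ring]
    have hc0 : (0:ℝ) ≤ 100*C1*T^(-(11:ℝ)/6)*(h:ℝ)^(β-5/3) := by positivity
    have hmono : ((h:ℝ)^2)^δ ≤ ((T:ℝ)^(10:ℕ))^δ :=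
      Real.rpow_le_rpow (by positivity) hab (by linarith)
    have eb : (((T:ℝ)^(10:ℕ)))^δ = T^((10:ℝ)*δ) := by
      rw [← Real.rpow_natCast T 10, ← Real.rpow_mul hT0.le]
      norm_num
    apply mul_le_mul_of_nonneg_left _ hc0
    rw [div_le_div_iff₀ hδ0 hδ0, eb]
    have ha0' : (0:ℝ) ≤ ((h:ℝ)^2)^δ := Real.rpow_nonneg (by positivity) _
    nlinarith [hδ0, ha0']
  -- now sum everything
  set K := 100*C1*T^(-(11:ℝ)/6)*(T^((10:ℝ)*δ)/δ) with hKdef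
  have hK0 : (0:ℝ) ≤ K := by rw [hKdef]; positivity
  have hT52 : (0:ℝ) ≤ T^((5:ℝ)/2) := Real.rpow_nonneg hT0.le _
  have hlogT : Real.log T ≤ T^δ/δ := by
    have l := Real.log_le_sub_one_of_pos (Real.rpow_pos_of_pos hT0 δ)
    rw [Real.log_rpow hT0] at l
    rw [le_div_iff₀ hδ0]
    linarith [l]
  have hlogsum : 2*Real.log ((H:ℝ)+1) ≤ 12*(T^δ/δ) := by
    have h56 : (H:ℝ)+1 ≤ T^6 := by
      have h25 : (2:ℝ)^5 ≤ T^5 := pow_le_pow_left₀ (by norm_num) hT2 5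
      nlinarith [pow_pos hT0 5, hT2, h25]
    have hl1 : Real.log ((H:ℝ)+1) ≤ Real.log (T^6) :=
      Real.log_le_log (by positivity) h56
    rw [Real.log_pow] at hl1
    push_cast at hl1
    nlinarith [hl1, hlogT, hδ0]
  have hmerge : T^((5:ℝ)/2)*T^(-(11:ℝ)/6)*T^((10:ℝ)*δ)*T^δ = T^((2:ℝ)/3 + 11*δ) := by
    rw [← Real.rpow_add hT0, ← Real.rpow_add hT0, ← Real.rpow_add hT0]
    congr 1
    ring
  calc |T ^ ((5 : ℝ) / 2) * ∑ h ∈ Finset.Icc 1 H,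
          ∫ t in ((h : ℝ) ^ 2)..(T ^ (10 : ℕ)), E t h * u T h t|
      = T^((5:ℝ)/2) * |∑ h ∈ Finset.Icc 1 H,
          ∫ t in ((h : ℝ) ^ 2)..(T ^ (10 : ℕ)), E t h * u T h t| := by
        rw [abs_mul, abs_of_nonneg hT52]
    _ ≤ T^((5:ℝ)/2) * ∑ h ∈ Finset.Icc 1 H,
          |∫ t in ((h : ℝ) ^ 2)..(T ^ (10 : ℕ)), E t h * u T h t| :=
        mul_le_mul_of_nonneg_left (Finset.abs_sum_le_sum_abs _ _) hT52
    _ ≤ T^((5:ℝ)/2) * ∑ h ∈ Finset.Icc 1 H,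
          (100*C1*T^(-(11:ℝ)/6)*(h:ℝ)^(β-5/3)) * (T^((10:ℝ)*δ)/δ) :=
        mul_le_mul_of_nonneg_left (Finset.sum_le_sum key) hT52
    _ = (T^((5:ℝ)/2) * K) * ∑ h ∈ Finset.Icc 1 H, (h:ℝ)^(β-5/3) := by
        rw [Finset.mul_sum, Finset.mul_sum]
        refine Finset.sum_congr rfl fun h _ => ?_
        rw [hKdef]
        ring
    _ ≤ (T^((5:ℝ)/2) * K) * ∑ h ∈ Finset.Icc 1 H, ((h:ℕ):ℝ)⁻¹ := by
        apply mul_le_mul_of_nonneg_left _ (mul_nonneg hT52 hK0)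
        apply Finset.sum_le_sum
        intro h hmem
        rw [Finset.mem_Icc] at hmem
        have hh1 : (1:ℝ) ≤ (h:ℝ) := by exact_mod_cast hmem.1
        rw [← Real.rpow_neg_one]
        exact Real.rpow_le_rpow_of_exponent_le hh1 (by linarith)
    _ ≤ (T^((5:ℝ)/2) * K) * (2*Real.log ((H:ℝ)+1)) :=
        mul_le_mul_of_nonneg_left (harmonic_le H) (mul_nonneg hT52 hK0)
    _ ≤ (T^((5:ℝ)/2) * K) * (12*(T^δ/δ)) :=
        mul_le_mul_of_nonneg_left hlogsum (mul_nonneg hT52 hK0)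
    _ = (1200*C1/δ^2) * (T^((5:ℝ)/2)*T^(-(11:ℝ)/6)*T^((10:ℝ)*δ)*T^δ) := by
        rw [hKdef]; field_simp; ring
    _ = (1200*C1/δ^2) * T^((2:ℝ)/3 + 11*δ) := by rw [hmerge]
    _ ≤ (1200*C1/δ^2) * T^((2:ℝ)/3 + ε) := by
        apply mul_le_mul_of_nonneg_left _ (by positivity)
        exact Real.rpow_le_rpow_of_exponent_le hT1 (by linarith)
end
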